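/- Every (a,b,c,d)-web contains no K_4-minor rooted at a, b, c, d. -/

import Mathlib

open SimpleGraph

variable {V : Type*}

/-- Branch-set definition of an `H`-minor in `G`. -/
def HasGraphMinor {W : Type*} (G : SimpleGraph V) (H : SimpleGraph W) : Prop :=
  ∃ B : W → Set V,
    (∀ w, (B w).Nonempty) ∧
    (∀ w, (G.induce (B w)).Connected) ∧
    (Pairwise fun w w' => Disjoint (B w) (B w')) ∧
    ∀ ⦃w w'⦄, H.Adj w w' → ∃ x ∈ B w, ∃ y ∈ B w', G.Adj x y

/-- `A,B,C,D` are the branch sets of a `K₄`-minor rooted at `a,b,c,d`. -/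
def RootedK4MinorOn (G : SimpleGraph V) (a b c d : V) (A B C D : Set V) : Prop :=
    a ∈ A ∧ b ∈ B ∧ c ∈ C ∧ d ∈ D ∧
    (G.induce A).Connected ∧ (G.induce B).Connected ∧
    (G.induce C).Connected ∧ (G.induce D).Connected ∧
    Disjoint A B ∧ Disjoint A C ∧ Disjoint A D ∧
    Disjoint B C ∧ Disjoint B D ∧ Disjoint C D ∧
    (∃ x ∈ A, ∃ y ∈ B, G.Adj x y) ∧ (∃ x ∈ A, ∃ y ∈ C, G.Adj x y) ∧
    (∃ x ∈ A, ∃ y ∈ D, G.Adj x y) ∧ (∃ x ∈ B, ∃ y ∈ C, G.Adj x y) ∧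
    (∃ x ∈ B, ∃ y ∈ D, G.Adj x y) ∧ (∃ x ∈ C, ∃ y ∈ D, G.Adj x y)

/-- A `K₄`-minor rooted at `a,b,c,d`. -/
def RootedK4Minor (G : SimpleGraph V) (a b c d : V) : Prop :=
  ∃ A B C D : Set V, RootedK4MinorOn G a b c d A B C D

/-- A `K₃`-minor rooted at `a,b,c`. -/
def RootedK3Minor (G : SimpleGraph V) (a b c : V) : Prop :=
  ∃ A B C : Set V,
    a ∈ A ∧ b ∈ B ∧ c ∈ C ∧
    (G.induce A).Connected ∧ (G.induce B).Connected ∧ (G.induce C).Connected ∧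
    Disjoint A B ∧ Disjoint A C ∧ Disjoint B C ∧
    (∃ x ∈ A, ∃ y ∈ B, G.Adj x y) ∧ (∃ x ∈ A, ∃ y ∈ C, G.Adj x y) ∧
    (∃ x ∈ B, ∃ y ∈ C, G.Adj x y)

/-- Add a new apex vertex adjacent to every vertex of `s`. -/
def Apex (G : SimpleGraph V) (s : Set V) : SimpleGraph (Option V) where
  Adj x y :=
    (∃ u v, x = some u ∧ y = some v ∧ G.Adj u v) ∨
    (∃ u, x = some u ∧ y = none ∧ u ∈ s) ∨
    (∃ v, x = none ∧ y = some v ∧ v ∈ s)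
  symm := by
    constructor
    rintro x y (⟨u, v, rfl, rfl, h⟩ | ⟨u, rfl, rfl, h⟩ | ⟨v, rfl, rfl, h⟩)
    · exact Or.inl ⟨v, u, rfl, rfl, h.symm⟩
    · exact Or.inr (Or.inr ⟨u, rfl, rfl, h⟩)
    · exact Or.inr (Or.inl ⟨v, rfl, rfl, h⟩)
  loopless := by
    constructor
    rintro x (⟨u, v, rfl, h, hadj⟩ | ⟨u, rfl, h, _⟩ | ⟨v, h, rfl, _⟩)
    · rw [Option.some_inj] at h; subst h; exact hadj.ne rfl
    · exact nomatch h
    · exact nomatch h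

/-- Planarity, via Wagner's theorem: no `K₅`-minor and no `K₃,₃`-minor. -/
def IsPlanar (G : SimpleGraph V) : Prop :=
  ¬ HasGraphMinor G (⊤ : SimpleGraph (Fin 5)) ∧
  ¬ HasGraphMinor G (completeBipartiteGraph (Fin 3) (Fin 3))

/-- `G` is `k`-connected: more than `k` vertices, and deleting fewer than `k`
vertices leaves a connected graph. -/
def KConnected (k : ℕ) (G : SimpleGraph V) : Prop :=
  k < Nat.card V ∧ ∀ S : Set V, S.Finite → S.ncard < k → (G.induce Sᶜ).Connected

/-- An `(s₁t₁,s₂t₂)`-linkage: an `s₁t₁`-path and an `s₂t₂`-path that are disjoint. -/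
def Linkage (G : SimpleGraph V) (s₁ t₁ s₂ t₂ : V) : Prop :=
  ∃ (P : G.Walk s₁ t₁) (Q : G.Walk s₂ t₂),
    P.IsPath ∧ Q.IsPath ∧ P.support.Disjoint Q.support

/-- `G` is obtained from its induced subgraph on `S` by attaching, to each triangle,
a (possibly empty) clique: `t x` records the triangle of the clique containing `x ∉ S`. -/
def CliqueExpansion (G : SimpleGraph V) (S : Set V) (t : V → Finset V) : Prop :=
  ∀ x ∉ S, ↑(t x) ⊆ S ∧ (t x).card = 3 ∧
    (∀ y ∈ t x, ∀ z ∈ t x, y ≠ z → G.Adj y z) ∧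
    (∀ y, G.Adj x y ↔ (y ∈ t x ∨ (y ∉ S ∧ y ≠ x ∧ t y = t x)))

/-- `H` is a planar graph with outerface cycle `(p,q,r,s)`, every internal face a
triangle, and every triangle a face.  (Combinatorial surrogate: `p,q,r,s` bound a
common face — witnessed by planarity of the graph with an apex added adjacent to
them — the edge count of a near-triangulation of a quadrilateral, and no
separating triangle.) -/
def IsQuadTriangulation {U : Type*} (H : SimpleGraph U) (p q r s : U) : Prop :=
  p ≠ q ∧ p ≠ r ∧ p ≠ s ∧ q ≠ r ∧ q ≠ s ∧ r ≠ s ∧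
  H.Adj p q ∧ H.Adj q r ∧ H.Adj r s ∧ H.Adj s p ∧
  IsPlanar H ∧ IsPlanar (Apex H {p, q, r, s}) ∧
  H.edgeSet.ncard + 7 = 3 * Nat.card U ∧
  ∀ T : Finset U, T.card = 3 → (∀ x ∈ T, ∀ y ∈ T, x ≠ y → H.Adj x y) →
    (((↑T)ᶜ : Set U) = ∅ ∨ (H.induce (↑T)ᶜ).Connected)

/-- `W` is an `(a,b,c,d)`-web. -/
def IsWeb (W : SimpleGraph V) (a b c d : V) : Prop :=
  ∃ (S : Set V) (ha : a ∈ S) (hb : b ∈ S) (hc : c ∈ S) (hd : d ∈ S),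
    IsQuadTriangulation (W.induce S) ⟨a, ha⟩ ⟨b, hb⟩ ⟨c, hc⟩ ⟨d, hd⟩ ∧
    ∃ t, CliqueExpansion W S t

/-- `W` is an `{a,b,c,d}`-web, i.e. an `(a',b',c',d')`-web for some ordering. -/
def IsUnorderedWeb (W : SimpleGraph V) (a b c d : V) : Prop :=
  ∃ p q r s : V, ({p, q, r, s} : Set V) = {a, b, c, d} ∧ IsWeb W p q r s

/-- A separation `(A, B)` of `G` (given by the vertex sets of the two sides). -/
def IsSeparation (G : SimpleGraph V) (A B : Set V) : Prop :=
  A ∪ B = Set.univ ∧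
  (∀ ⦃x y⦄, G.Adj x y → (x ∈ A ∧ y ∈ A) ∨ (x ∈ B ∧ y ∈ B)) ∧
  (A \ B).Nonempty ∧ (B \ A).Nonempty

/-!
A vertex of a clique `X_T` can be traded for a vertex of its triangle `T`: since `T ∪ X_T` is a
clique, intersecting the branch sets of a `K₄`-minor rooted at `a, b, c, d` with `V(H)` keeps them
connected and pairwise adjacent, so `H` itself has such a minor. Adding a vertex adjacent to
`a, b, c, d`, which keeps `H` planar because they lie on its outer face, turns it into a
`K₅`-minor.
-/

variable {G : SimpleGraph V}

lemma SimpleGraph.Connected.induce_image {V' : Type*} {G' : SimpleGraph V'} (f : G →g G')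
    {X : Set V} (h : (G.induce X).Connected) : (G'.induce (f '' X)).Connected :=
  h.map (induceHom f (Set.mapsTo_image f X)) (Set.surjective_mapsTo_image_restrict f X)

/-- `w` stands in for `x` in `S`: it is `x` itself, or a vertex of the triangle whose attached
clique contains `x`. -/
def IsAnchor (S : Set V) (t : V → Finset V) (x w : V) : Prop :=
  (x ∈ S ∧ w = x) ∨ (x ∉ S ∧ w ∈ t x)

namespace CliqueExpansion

variable {S : Set V} {t : V → Finset V} {x y w w' : V}

lemma mem_of_adj (hce : CliqueExpansion G S t) (hx : x ∉ S) (hy : y ∈ S) (h : G.Adj x y) :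
    y ∈ t x :=
  (((hce x hx).2.2.2 y).1 h).resolve_right fun h' => h'.1 hy

lemma eq_of_adj (hce : CliqueExpansion G S t) (hx : x ∉ S) (hy : y ∉ S) (h : G.Adj x y) :
    t y = t x :=
  ((((hce x hx).2.2.2 y).1 h).resolve_left fun h' => hy ((hce x hx).1 h')).2.2

lemma isAnchor_of_adj (hce : CliqueExpansion G S t) (hx : x ∉ S) (h : G.Adj x y)
    (hw : IsAnchor S t y w) : IsAnchor S t x w := by
  refine Or.inr ⟨hx, ?_⟩
  rcases hw with ⟨hy, rfl⟩ | ⟨hy, hw⟩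
  · exact hce.mem_of_adj hx hy h
  · exact hce.eq_of_adj hx hy h ▸ hw

lemma adj_of_isAnchor (hce : CliqueExpansion G S t) (hw : IsAnchor S t x w)
    (hw' : IsAnchor S t x w') (hne : w ≠ w') : G.Adj w w' := by
  rcases hw with ⟨hx, rfl⟩ | ⟨hx, hw⟩
  · rcases hw' with ⟨-, rfl⟩ | ⟨hx', -⟩
    · exact absurd rfl hne
    · exact absurd hx hx'
  · rcases hw' with ⟨hx', -⟩ | ⟨-, hw'⟩
    · exact absurd hx' hx
    · exact (hce x hx).2.2.1 w hw w' hw' hne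

lemma eq_or_adj_of_isAnchor (hce : CliqueExpansion G S t) (h : G.Adj x y)
    (hw : IsAnchor S t x w) (hw' : IsAnchor S t y w') : w = w' ∨ G.Adj w w' := by
  by_cases hx : x ∈ S
  · obtain rfl : w = x := (hw.resolve_right fun h' => h'.1 hx).2
    rcases hw' with ⟨-, rfl⟩ | ⟨hy, hw'⟩
    · exact Or.inr h
    · have hwy : IsAnchor S t y w := Or.inr ⟨hy, hce.mem_of_adj hy hx h.symm⟩
      exact (eq_or_ne w w').imp_right (hce.adj_of_isAnchor hwy (Or.inr ⟨hy, hw'⟩))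
  · exact (eq_or_ne w w').imp_right (hce.adj_of_isAnchor hw (hce.isAnchor_of_adj hx h hw'))

lemma exists_isAnchor_reachable (hce : CliqueExpansion G S t) {A : Set V} {x y : A}
    (p : (G.induce A).Walk x y) (hy : (y : V) ∈ S) :
    ∃ w, ∃ hw : w ∈ A ∩ S, IsAnchor S t x w ∧
      (G.induce (A ∩ S)).Reachable ⟨w, hw⟩ ⟨y, y.2, hy⟩ := by
  induction p with
  | nil => exact ⟨_, ⟨Subtype.prop _, hy⟩, Or.inl ⟨hy, rfl⟩, .rfl⟩
  | @cons u v y huv p ih =>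
    obtain ⟨w, hw, hvw, hreach⟩ := ih hy
    by_cases hu : (u : V) ∈ S
    · refine ⟨u, ⟨u.2, hu⟩, Or.inl ⟨hu, rfl⟩, ?_⟩
      rcases hce.eq_or_adj_of_isAnchor huv (Or.inl ⟨hu, rfl⟩) hvw with rfl | huw
      · exact hreach
      · have huw' : (G.induce (A ∩ S)).Adj ⟨u, u.2, hu⟩ ⟨w, hw⟩ := huw
        exact huw'.reachable.trans hreach
    · exact ⟨w, hw, hce.isAnchor_of_adj hu huv hvw, hreach⟩

lemma connected_induce_inter (hce : CliqueExpansion G S t) {A : Set V}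
    (hA : (G.induce A).Connected) (hAS : (A ∩ S).Nonempty) : (G.induce (A ∩ S)).Connected := by
  obtain ⟨r, hr⟩ := hAS
  rw [connected_iff]
  refine ⟨?_, ⟨⟨r, hr⟩⟩⟩
  rintro ⟨u, hu⟩ ⟨v, hv⟩
  obtain ⟨p⟩ := hA.preconnected ⟨u, hu.1⟩ ⟨v, hv.1⟩
  obtain ⟨w, hw, huw, hreach⟩ := hce.exists_isAnchor_reachable p hv.2
  obtain rfl : w = u := (huw.resolve_right fun h => h.1 hu.2).2
  exact hreach

lemma exists_isAnchor_mem_inter (hce : CliqueExpansion G S t) {A : Set V}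
    (hA : (G.induce A).Connected) (hAS : (A ∩ S).Nonempty) (hx : x ∈ A) :
    ∃ w ∈ A ∩ S, IsAnchor S t x w := by
  obtain ⟨r, hr⟩ := hAS
  obtain ⟨p⟩ := hA.preconnected ⟨x, hx⟩ ⟨r, hr.1⟩
  obtain ⟨w, hw, hxw, -⟩ := hce.exists_isAnchor_reachable p hr.2
  exact ⟨w, hw, hxw⟩

lemma exists_adj_inter (hce : CliqueExpansion G S t) {A B : Set V}
    (hA : (G.induce A).Connected) (hB : (G.induce B).Connected)
    (hAS : (A ∩ S).Nonempty) (hBS : (B ∩ S).Nonempty) (hAB : Disjoint A B)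
    (h : ∃ x ∈ A, ∃ y ∈ B, G.Adj x y) :
    ∃ x ∈ A ∩ S, ∃ y ∈ B ∩ S, G.Adj x y := by
  obtain ⟨x, hx, y, hy, hxy⟩ := h
  obtain ⟨w, hw, hxw⟩ := hce.exists_isAnchor_mem_inter hA hAS hx
  obtain ⟨w', hw', hyw'⟩ := hce.exists_isAnchor_mem_inter hB hBS hy
  exact ⟨w, hw, w', hw',
    (hce.eq_or_adj_of_isAnchor hxy hxw hyw').resolve_left (hAB.ne_of_mem hw.1 hw'.1)⟩

end CliqueExpansion

def IsRootedCliqueModel (G : SimpleGraph V) {W : Type*} (r : W → V) (B : W → Set V) : Prop :=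
  (∀ w, r w ∈ B w) ∧ (∀ w, (G.induce (B w)).Connected) ∧
    Pairwise (fun w w' => Disjoint (B w) (B w')) ∧
    Pairwise fun w w' => ∃ x ∈ B w, ∃ y ∈ B w', G.Adj x y

lemma RootedK4MinorOn.isRootedCliqueModel {a b c d : V} {A B C D : Set V}
    (h : RootedK4MinorOn G a b c d A B C D) :
    IsRootedCliqueModel G ![a, b, c, d] ![A, B, C, D] := by
  obtain ⟨ha, hb, hc, hd, cA, cB, cC, cD, dAB, dAC, dAD, dBC, dBD, dCD,
    eAB, eAC, eAD, eBC, eBD, eCD⟩ := h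
  refine ⟨?_, ?_, ?_, ?_⟩
  · intro i; fin_cases i <;> assumption
  · intro i; fin_cases i <;> assumption
  · intro i j hij
    fin_cases i <;> fin_cases j <;>
      first | exact absurd rfl hij | assumption | exact Disjoint.symm ‹_›
  · have adj_symm : ∀ {X Y : Set V},
        (∃ x ∈ X, ∃ y ∈ Y, G.Adj x y) → ∃ x ∈ Y, ∃ y ∈ X, G.Adj x y :=
      fun ⟨x, hx, y, hy, hxy⟩ => ⟨y, hy, x, hx, hxy.symm⟩
    intro i j hij
    fin_cases i <;> fin_cases j <;>
      first | exact absurd rfl hij | assumption | exact adj_symm ‹_›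

namespace IsRootedCliqueModel

variable {W : Type*} {r : W → V} {B : W → Set V}

lemma hasGraphMinor (h : IsRootedCliqueModel G r B) : HasGraphMinor G (⊤ : SimpleGraph W) :=
  ⟨B, fun w => ⟨r w, h.1 w⟩, h.2.1, h.2.2.1, fun _ _ hne => h.2.2.2 hne⟩

lemma induce {S : Set V} (h : IsRootedCliqueModel G r B) (hB : ∀ w, B w ⊆ S) :
    IsRootedCliqueModel (G.induce S) (fun w => ⟨r w, hB w (h.1 w)⟩)
      (fun w => Subtype.val ⁻¹' B w) := by
  obtain ⟨hr, hcon, hdisj, hadj⟩ := h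
  refine ⟨hr, fun w => ?_, fun w w' hne => (hdisj hne).preimage _, fun w w' hne => ?_⟩
  · exact (hcon w).map ⟨fun (x : B w) => ⟨⟨x, hB w x.2⟩, x.2⟩, fun hxy => hxy⟩
      fun ⟨⟨x, _⟩, hx⟩ => ⟨⟨x, hx⟩, rfl⟩
  · obtain ⟨x, hx, y, hy, hxy⟩ := hadj hne
    exact ⟨⟨x, hB w hx⟩, hx, ⟨y, hB w' hy⟩, hy, hxy⟩

lemma apex {n : ℕ} {r : Fin n → V} {B : Fin n → Set V} {s : Set V}
    (h : IsRootedCliqueModel G r B) (hr : ∀ i, r i ∈ s) :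
    IsRootedCliqueModel (Apex G s) (Fin.cons none fun i => some (r i))
      (Fin.cons {none} fun i => some '' B i) := by
  obtain ⟨hrB, hcon, hdisj, hadj⟩ := h
  let incl : G →g Apex G s := ⟨some, fun huv => Or.inl ⟨_, _, rfl, rfl, huv⟩⟩
  have apex_adj :
      ∀ i, ∃ x ∈ ({none} : Set (Option V)), ∃ y ∈ some '' B i, (Apex G s).Adj x y :=
    fun i => ⟨none, rfl, some (r i), ⟨r i, hrB i, rfl⟩,
      Or.inr (Or.inr ⟨r i, rfl, rfl, hr i⟩)⟩
  refine ⟨Fin.cases rfl fun i => ⟨r i, hrB i, rfl⟩, fun i => ?_, ?_, ?_⟩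
  · induction i using Fin.cases
    · show ((Apex G s).induce {none}).Connected
      rw [induce_singleton_eq_top]
      exact connected_top
    · exact (hcon _).induce_image incl
  · intro i j hij
    induction i using Fin.cases <;> induction j using Fin.cases
    · exact absurd rfl hij
    · exact Set.disjoint_singleton_left.2 (by simp)
    · exact Set.disjoint_singleton_right.2 (by simp)
    · exact (Set.disjoint_image_iff (Option.some_injective V)).2
        (hdisj fun hij' => hij (congrArg Fin.succ hij'))
  · intro i j hij
    induction i using Fin.cases <;> induction j using Fin.cases
    · exact absurd rfl hij
    · exact apex_adj _
    · obtain ⟨x, hx, y, hy, hxy⟩ := apex_adj ‹_›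
      exact ⟨y, hy, x, hx, hxy.symm⟩
    · obtain ⟨x, hx, y, hy, hxy⟩ := hadj fun hij' => hij (congrArg Fin.succ hij')
      exact ⟨some x, ⟨x, hx, rfl⟩, some y, ⟨y, hy, rfl⟩, incl.map_rel hxy⟩

end IsRootedCliqueModel

lemma CliqueExpansion.isRootedCliqueModel_inter {S : Set V} {t : V → Finset V}
    {W : Type*} {r : W → V} {B : W → Set V} (hce : CliqueExpansion G S t)
    (h : IsRootedCliqueModel G r B) (hr : ∀ w, r w ∈ S) :
    IsRootedCliqueModel G r (fun w => B w ∩ S) := by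
  obtain ⟨hrB, hcon, hdisj, hadj⟩ := h
  have hBS : ∀ w, (B w ∩ S).Nonempty := fun w => ⟨r w, hrB w, hr w⟩
  exact ⟨fun w => ⟨hrB w, hr w⟩, fun w => hce.connected_induce_inter (hcon w) (hBS w),
    fun w w' hne => (hdisj hne).mono Set.inter_subset_left Set.inter_subset_left,
    fun w w' hne =>
      hce.exists_adj_inter (hcon w) (hcon w') (hBS w) (hBS w') (hdisj hne) (hadj hne)⟩

/-- every `(a,b,c,d)`-web contains no `K₄`-minor rooted at `a,b,c,d`. -/
theorem web_no_rooted_K4_minor (G : SimpleGraph V) (a b c d : V)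
    (h : IsWeb G a b c d) : ¬ RootedK4Minor G a b c d := by
  rintro ⟨A, B, C, D, hK4⟩
  obtain ⟨S, ha, hb, hc, hd, ⟨-, -, -, -, -, -, -, -, -, -, -, hplanar, -, -⟩, t, hce⟩ := h
  have hroots : ∀ i, ![a, b, c, d] i ∈ S := by
    intro i; fin_cases i <;> assumption
  have hmodel := (hce.isRootedCliqueModel_inter hK4.isRootedCliqueModel hroots).induce
    fun _ => Set.inter_subset_right
  refine hplanar.1 (hmodel.apex ?_).hasGraphMinor
  intro i; fin_cases i <;> simp
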